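/- The widening truncation bounds depth: for every natural number i and every l in the symbolic lattice L, D(T_i(l)) ≤ i. -/

import Mathlib

inductive SymExpr (P U B F : Type*) where
  | bot : SymExpr P U B F
  | top : SymExpr P U B F
  | prim : P → SymExpr P U B F
  | unop : U → SymExpr P U B F → SymExpr P U B F
  | binop : B → SymExpr P U B F → SymExpr P U B F → SymExpr P U B F
  | fn : F → List (SymExpr P U B F) → SymExpr P U B F
  | phi : List (SymExpr P U B F) → SymExpr P U B F

namespace SymExpr

variable {P U B F : Type*}

/-- The partial order `⊑` on the symbolic lattice. -/
inductive Le : SymExpr P U B F → SymExpr P U B F → Prop where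
  | bot (l) : Le .bot l
  | top (l) : Le l .top
  | prim (p : P) : Le (.prim p) (.prim p)
  | unop {l l'} (u : U) : Le l l' → Le (.unop u l) (.unop u l')
  | binop {l₁ l₂ l₁' l₂'} (b : B) : Le l₁ l₁' → Le l₂ l₂' →
      Le (.binop b l₁ l₂) (.binop b l₁' l₂')
  | fn {ls ls'} (f : F) : List.Forall₂ Le ls ls' → Le (.fn f ls) (.fn f ls')
  | phi {ls ls'} : List.Forall₂ Le ls ls' → Le (.phi ls) (.phi ls')

attribute [local instance] Classical.propDecidable

mutual
noncomputable def join : SymExpr P U B F → SymExpr P U B F → SymExpr P U B F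
  | .bot, l => l
  | l, .bot => l
  | .prim p, .prim p' => if p = p' then .prim p else .top
  | .unop u l, .unop u' l' => if u = u' then .unop u (join l l') else .top
  | .binop b l₁ l₂, .binop b' l₁' l₂' =>
      if b = b' then .binop b (join l₁ l₁') (join l₂ l₂') else .top
  | .fn f ls, .fn f' ls' =>
      if f = f' ∧ ls.length = ls'.length then .fn f (joinList ls ls') else .top
  | .phi ls, .phi ls' =>
      if ls.length = ls'.length then .phi (joinList ls ls') else .top
  | _, _ => .top

noncomputable def joinList : List (SymExpr P U B F) → List (SymExpr P U B F) → List (SymExpr P U B F)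
  | l :: ls, l' :: ls' => join l l' :: joinList ls ls'
  | _, _ => []
end

mutual
noncomputable def meet : SymExpr P U B F → SymExpr P U B F → SymExpr P U B F
  | .top, l => l
  | l, .top => l
  | .prim p, .prim p' => if p = p' then .prim p else .bot
  | .unop u l, .unop u' l' => if u = u' then .unop u (meet l l') else .bot
  | .binop b l₁ l₂, .binop b' l₁' l₂' =>
      if b = b' then .binop b (meet l₁ l₁') (meet l₂ l₂') else .bot
  | .fn f ls, .fn f' ls' =>
      if f = f' ∧ ls.length = ls'.length then .fn f (meetList ls ls') else .bot
  | .phi ls, .phi ls' =>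
      if ls.length = ls'.length then .phi (meetList ls ls') else .bot
  | _, _ => .bot

noncomputable def meetList : List (SymExpr P U B F) → List (SymExpr P U B F) → List (SymExpr P U B F)
  | l :: ls, l' :: ls' => meet l l' :: meetList ls ls'
  | _, _ => []
end

mutual
def depth : SymExpr P U B F → ℕ
  | .bot => 0
  | .top => 0
  | .prim _ => 0
  | .unop _ l => 1 + depth l
  | .binop _ l₁ l₂ => 1 + max (depth l₁) (depth l₂)
  | .fn _ ls => 1 + depthList ls
  | .phi ls => 1 + depthList ls

def depthList : List (SymExpr P U B F) → ℕ
  | [] => 0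
  | l :: ls => max (depth l) (depthList ls)
end

/-- The widening truncation `T_i`. -/
def trunc : ℕ → SymExpr P U B F → SymExpr P U B F
  | _, .bot => .bot
  | _, .top => .top
  | _, .prim p => .prim p
  | 0, .unop _ _ => .top
  | 0, .binop _ _ _ => .top
  | 0, .fn _ _ => .top
  | 0, .phi _ => .top
  | i + 1, .unop u l => .unop u (trunc i l)
  | i + 1, .binop b l₁ l₂ => .binop b (trunc i l₁) (trunc i l₂)
  | i + 1, .fn f ls => .fn f (ls.map (fun l => trunc i l))
  | i + 1, .phi ls => .phi (ls.map (fun l => trunc i l))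

end SymExpr


namespace SymExpr

variable {P U B F : Type*}

theorem depthList_le_iff {ls : List (SymExpr P U B F)} {n : ℕ} :
    depthList ls ≤ n ↔ ∀ l ∈ ls, depth l ≤ n := by
  induction ls with
  | nil => simp [depthList]
  | cons l ls ih => simp [depthList, ih]

end SymExpr

/-- the widening truncation bounds depth: `D(T_i(l)) ≤ i`. -/
theorem SymExpr.depth_trunc_le {P U B F : Type*} (i : ℕ) (l : SymExpr P U B F) :
    (SymExpr.trunc i l).depth ≤ i := by
  induction i generalizing l with
  | zero => cases l <;> simp [trunc, depth]
  | succ i ih =>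
    have hmap (ls : List (SymExpr P U B F)) : depthList (ls.map (trunc i)) ≤ i :=
      depthList_le_iff.2 (by simpa using fun l _ => ih l)
    cases l <;> simp only [trunc, depth] <;> grind
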